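/- For the Markovian wait-then-jump first-return-time density P_M^{wj}(t) = e^{-t/2}[I₀(ζ) − I₀'(ζ)]_{ζ=t/2} − e^{-t}, it holds that P_M^{wj}(0) = 0 and P_M^{wj}(t) ≥ 0 for all t ≥ 0. -/

import Mathlib

noncomputable def besselI0 (ζ : ℝ) : ℝ := ∑' j : ℕ, (ζ ^ 2 / 4) ^ j / ((Nat.factorial j : ℝ)) ^ 2

noncomputable def PMwj (t : ℝ) : ℝ :=
  Real.exp (-t / 2) * (besselI0 (t / 2) - deriv besselI0 (t / 2)) - Real.exp (-t)

/-!
Write `I₀ ζ = g (ζ² / 4)` with `g u = ∑ uⁿ / (n!)²`. Bessel's equation `I₀'' + I₀' / ζ = I₀` gives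
`(e^ζ (I₀ - I₀'))' = e^ζ (I₀ - I₀'') = e^ζ I₀' / ζ = e^ζ g'(ζ² / 4) / 2 ≥ 0`, so `e^ζ (I₀ - I₀')`
increases from its value `1` at `ζ = 0`; and `PMwj t = e^{-t} (e^{t/2} (I₀ - I₀')(t/2) - 1)`.
-/

open Real
open scoped Nat

noncomputable def evalSeries (a : ℕ → ℝ) (x : ℝ) : ℝ := ∑' n, a n * x ^ n

def coeffDeriv (a : ℕ → ℝ) (n : ℕ) : ℝ := (n + 1) * a (n + 1)

section EntireSeries

variable {a : ℕ → ℝ}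

lemma summable_coeffDeriv_mul_pow (ha : ∀ r : ℝ, Summable fun n => a n * r ^ n) (r : ℝ) :
    Summable fun n => coeffDeriv a n * r ^ n := by
  set R := max 1 |r|
  have hR : 1 ≤ R := le_max_left _ _
  have hsum : Summable fun n => |a (n + 1) * (2 * R) ^ (n + 1)| :=
    (summable_nat_add_iff 1).mpr (ha (2 * R)).abs
  refine hsum.of_norm_bounded fun n => ?_
  have hn : ((n : ℝ) + 1) ≤ 2 ^ (n + 1) := by exact_mod_cast (Nat.lt_two_pow_self).le
  have hr : |r| ^ n ≤ R ^ (n + 1) :=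
    (pow_le_pow_left₀ (abs_nonneg r) (le_max_right _ _) n).trans (pow_le_pow_right₀ hR n.le_succ)
  rw [Real.norm_eq_abs, coeffDeriv, abs_mul, abs_mul, abs_pow, abs_mul, abs_pow,
    abs_of_nonneg (by positivity : (0 : ℝ) ≤ n + 1),
    abs_of_nonneg (by positivity : (0 : ℝ) ≤ 2 * R), mul_pow]
  calc ((n : ℝ) + 1) * |a (n + 1)| * |r| ^ n
      = |a (n + 1)| * (((n : ℝ) + 1) * |r| ^ n) := by ring
    _ ≤ |a (n + 1)| * (2 ^ (n + 1) * R ^ (n + 1)) := by gcongr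

lemma hasDerivAt_evalSeries (ha : ∀ r : ℝ, Summable fun n => a n * r ^ n) (x : ℝ) :
    HasDerivAt (evalSeries a) (evalSeries (coeffDeriv a) x) x := by
  have hsplit : evalSeries a = fun y => a 0 + ∑' n, a (n + 1) * y ^ (n + 1) := by
    funext y
    rw [evalSeries, (ha y).tsum_eq_zero_add, pow_zero, mul_one]
  set R := |x| + 1
  have hball : ∀ y ∈ Metric.ball (0 : ℝ) R, |y| ≤ R := fun y hy => by
    rw [mem_ball_zero_iff, Real.norm_eq_abs] at hy
    exact hy.le
  have hx : x ∈ Metric.ball (0 : ℝ) R := by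
    rw [mem_ball_zero_iff, Real.norm_eq_abs]
    exact lt_add_one _
  have hterm : ∀ n y, HasDerivAt (fun y => a (n + 1) * y ^ (n + 1)) (coeffDeriv a n * y ^ n) y :=
    fun n y => ((hasDerivAt_pow (n + 1) y).const_mul (a (n + 1))).congr_deriv <| by
      rw [coeffDeriv, Nat.add_sub_cancel]
      push_cast
      ring
  rw [hsplit]
  refine HasDerivAt.const_add _ ?_
  refine hasDerivAt_tsum_of_isPreconnected (summable_coeffDeriv_mul_pow ha R).abs
    Metric.isOpen_ball (convex_ball 0 R).isPreconnected (fun n y _ => hterm n y)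
    (fun n y hy => ?_) hx ((summable_nat_add_iff 1).mpr (ha x)) hx
  rw [Real.norm_eq_abs, abs_mul, abs_mul, abs_pow, abs_pow, abs_of_pos (by positivity : 0 < R)]
  gcongr
  exact hball y hy

lemma mul_evalSeries_coeffDeriv (ha : ∀ r : ℝ, Summable fun n => a n * r ^ n) (x : ℝ) :
    x * evalSeries (coeffDeriv a) x = evalSeries (fun n => n * a n) x := by
  have hshift : Summable fun n => (n + 1 : ℕ) * a (n + 1) * x ^ (n + 1) := by
    refine ((summable_coeffDeriv_mul_pow ha x).mul_left x).congr fun n => ?_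
    rw [coeffDeriv]
    push_cast
    ring
  rw [evalSeries, evalSeries, ← tsum_mul_left,
    ((summable_nat_add_iff (f := fun n : ℕ => (n : ℝ) * a n * x ^ n) 1).mp hshift).tsum_eq_zero_add]
  simp only [CharP.cast_eq_zero, zero_mul, zero_add, coeffDeriv]
  refine tsum_congr fun n => ?_
  push_cast
  ring

lemma evalSeries_zero (a : ℕ → ℝ) : evalSeries a 0 = a 0 := by
  rw [evalSeries, tsum_eq_single 0 fun n hn => by rw [zero_pow hn, mul_zero], pow_zero, mul_one]

lemma evalSeries_nonneg (ha : ∀ n, 0 ≤ a n) {x : ℝ} (hx : 0 ≤ x) : 0 ≤ evalSeries a x :=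
  tsum_nonneg fun n => mul_nonneg (ha n) (pow_nonneg hx n)

end EntireSeries

noncomputable def besselCoeff (n : ℕ) : ℝ := ((n ! : ℝ) ^ 2)⁻¹

lemma summable_besselCoeff_mul_pow (r : ℝ) : Summable fun n => besselCoeff n * r ^ n := by
  refine (Real.summable_pow_div_factorial |r|).of_norm_bounded fun n => ?_
  have hfac : (1 : ℝ) ≤ n ! := by exact_mod_cast n.factorial_pos
  rw [Real.norm_eq_abs, abs_mul, abs_pow, besselCoeff, abs_inv, abs_pow, Nat.abs_cast,
    inv_mul_eq_div]
  gcongr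
  nlinarith

lemma besselI0_eq_evalSeries (ζ : ℝ) : besselI0 ζ = evalSeries besselCoeff (ζ ^ 2 / 4) :=
  tsum_congr fun _ => div_eq_inv_mul _ _

lemma succ_mul_coeffDeriv_besselCoeff (n : ℕ) :
    (n + 1) * coeffDeriv besselCoeff n = besselCoeff n := by
  have hfac : (n ! : ℝ) ≠ 0 := by exact_mod_cast n.factorial_ne_zero
  rw [coeffDeriv, besselCoeff, besselCoeff, Nat.factorial_succ]
  push_cast
  field_simp

-- Bessel's equation `u g'' + g' = g`, i.e. `I₀'' + I₀' / ζ = I₀` in the variable `u = ζ² / 4`.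
lemma mul_evalSeries_coeffDeriv_coeffDeriv_besselCoeff (u : ℝ) :
    u * evalSeries (coeffDeriv (coeffDeriv besselCoeff)) u =
      evalSeries besselCoeff u - evalSeries (coeffDeriv besselCoeff) u := by
  rw [mul_evalSeries_coeffDeriv (summable_coeffDeriv_mul_pow summable_besselCoeff_mul_pow) u,
    evalSeries, evalSeries, evalSeries, ← (summable_besselCoeff_mul_pow u).tsum_sub
      (summable_coeffDeriv_mul_pow summable_besselCoeff_mul_pow u)]
  refine tsum_congr fun n => ?_
  rw [← succ_mul_coeffDeriv_besselCoeff n]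
  ring

lemma hasDerivAt_besselI0 (ζ : ℝ) :
    HasDerivAt besselI0 (evalSeries (coeffDeriv besselCoeff) (ζ ^ 2 / 4) * (ζ / 2)) ζ := by
  have hsq : HasDerivAt (fun ζ : ℝ => ζ ^ 2 / 4) (ζ / 2) ζ :=
    ((hasDerivAt_pow 2 ζ).div_const 4).congr_deriv (by ring)
  rw [show besselI0 = evalSeries besselCoeff ∘ fun ζ => ζ ^ 2 / 4 from
    funext besselI0_eq_evalSeries]
  exact (hasDerivAt_evalSeries summable_besselCoeff_mul_pow _).comp ζ hsq

lemma deriv_besselI0 :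
    deriv besselI0 = fun ζ => evalSeries (coeffDeriv besselCoeff) (ζ ^ 2 / 4) * (ζ / 2) :=
  funext fun ζ => (hasDerivAt_besselI0 ζ).deriv

lemma besselI0_zero : besselI0 0 = 1 := by
  simp [besselI0_eq_evalSeries, evalSeries_zero, besselCoeff]

lemma deriv_besselI0_zero : deriv besselI0 0 = 0 := by
  simp [deriv_besselI0]

lemma hasDerivAt_deriv_besselI0 (ζ : ℝ) :
    HasDerivAt (deriv besselI0)
      (besselI0 ζ - evalSeries (coeffDeriv besselCoeff) (ζ ^ 2 / 4) / 2) ζ := by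
  have hsq : HasDerivAt (fun ζ : ℝ => ζ ^ 2 / 4) (ζ / 2) ζ :=
    ((hasDerivAt_pow 2 ζ).div_const 4).congr_deriv (by ring)
  have hg' := (hasDerivAt_evalSeries
    (summable_coeffDeriv_mul_pow summable_besselCoeff_mul_pow) (ζ ^ 2 / 4)).comp ζ hsq
  rw [deriv_besselI0]
  refine (hg'.mul ((hasDerivAt_id ζ).div_const 2)).congr_deriv ?_
  simp only [Function.comp_apply, id, besselI0_eq_evalSeries]
  linear_combination mul_evalSeries_coeffDeriv_coeffDeriv_besselCoeff (ζ ^ 2 / 4)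

lemma monotone_exp_mul_besselI0_sub_deriv :
    Monotone fun ζ => exp ζ * (besselI0 ζ - deriv besselI0 ζ) := by
  have hderiv : ∀ ζ, HasDerivAt (fun ζ => exp ζ * (besselI0 ζ - deriv besselI0 ζ))
      (exp ζ * (evalSeries (coeffDeriv besselCoeff) (ζ ^ 2 / 4) / 2)) ζ := fun ζ =>
    ((hasDerivAt_exp ζ).mul ((hasDerivAt_besselI0 ζ).sub (hasDerivAt_deriv_besselI0 ζ))).congr_deriv
      (by rw [deriv_besselI0, Pi.sub_apply]; ring)
  refine monotone_of_deriv_nonneg (fun ζ => (hderiv ζ).differentiableAt) fun ζ => ?_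
  rw [(hderiv ζ).deriv]
  have hg' : 0 ≤ evalSeries (coeffDeriv besselCoeff) (ζ ^ 2 / 4) :=
    evalSeries_nonneg (fun n => by rw [coeffDeriv, besselCoeff]; positivity) (by positivity)
  positivity

lemma one_le_exp_mul_besselI0_sub_deriv {ζ : ℝ} (hζ : 0 ≤ ζ) :
    1 ≤ exp ζ * (besselI0 ζ - deriv besselI0 ζ) := by
  simpa [besselI0_zero, deriv_besselI0_zero] using monotone_exp_mul_besselI0_sub_deriv hζ

theorem PMwj_properties : PMwj 0 = 0 ∧ ∀ t : ℝ, 0 ≤ t → 0 ≤ PMwj t := by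
  refine ⟨by simp [PMwj, besselI0_zero, deriv_besselI0_zero], fun t ht => ?_⟩
  have hexp : exp (-t / 2) = exp (-t) * exp (t / 2) := by
    rw [← exp_add]
    ring_nf
  have hPMwj : PMwj t =
      exp (-t) * (exp (t / 2) * (besselI0 (t / 2) - deriv besselI0 (t / 2)) - 1) := by
    rw [PMwj, hexp]
    ring
  have hone := one_le_exp_mul_besselI0_sub_deriv (by linarith : 0 ≤ t / 2)
  rw [hPMwj]
  exact mul_nonneg (exp_pos _).le (by linarith)
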